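/- arXiv:1710.05071 — 3 statements merged into one kernel-verified Lean document; each statement's English description precedes it below -/
import Mathlib

section
/- Let a ∈ ℂ with 2·Im(a)² − Re(a)² − 2 > 0. Then the cubic polynomial f_a' has exactly one real root, and this root lies in the open interval (−1, 1). -/
/-!
Since `a + ā = 2 Re a` and `a ā = |a|²`, the derivative of `f_a` is a cubic `g` with real
coefficients, and `g(±1) = ±2 |a ∓ 1|²` by the product rule. The secant slope
`(g v - g u) / (v - u)` equals `3 (u + v - Re a)² + (u - v)² + (2 Im(a)² - Re(a)² - 2)`, which the
hypothesis makes positive: `g` is strictly increasing, so it has exactly one real zero, and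
that zero lies between `-1` and `1`.
-/

open Complex

noncomputable def fA (a z : ℂ) : ℂ := (z - 1) * (z + 1) * (z - a) * (z - starRingEnd ℂ a)

open Set

theorem StrictMono.existsUnique_eq_mem_Ioo {α δ : Type*} [ConditionallyCompleteLinearOrder α]
    [TopologicalSpace α] [OrderTopology α] [DenselyOrdered α] [LinearOrder δ]
    [TopologicalSpace δ] [OrderClosedTopology δ] {f : α → δ} (hf : StrictMono f)
    {a b : α} (hcont : ContinuousOn f (Icc a b)) {c : δ} (hac : f a < c) (hcb : c < f b) :
    ∃ x ∈ Ioo a b, f x = c ∧ ∀ y, f y = c → y = x := by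
  obtain ⟨x, hx, hfx⟩ :=
    intermediate_value_Ioo (hf.lt_iff_lt.1 (hac.trans hcb)).le hcont ⟨hac, hcb⟩
  exact ⟨x, hx, hfx, fun y hy => hf.injective (hy.trans hfx.symm)⟩

noncomputable def fADeriv (a : ℂ) (x : ℝ) : ℝ :=
  4 * x ^ 3 - 6 * a.re * x ^ 2 + 2 * (normSq a - 1) * x + 2 * a.re

theorem hasDerivAt_fA (a z : ℂ) :
    HasDerivAt (fA a)
      (4 * z ^ 3 - 6 * a.re * z ^ 2 + 2 * (normSq a - 1) * z + 2 * a.re) z := by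
  have h : HasDerivAt (fun w => (w - 1) * (w + 1) * (w - a) * (w - starRingEnd ℂ a)) _ z :=
    ((((hasDerivAt_id' z).sub_const 1).mul ((hasDerivAt_id' z).add_const 1)).mul
      ((hasDerivAt_id' z).sub_const a)).mul ((hasDerivAt_id' z).sub_const (starRingEnd ℂ a))
  refine h.congr_deriv ?_
  have hre : (2 * a.re : ℂ) = a + starRingEnd ℂ a := by rw [add_conj]; push_cast; ring
  rw [← mul_conj]
  simp only [Pi.mul_apply]
  linear_combination (3 * z ^ 2 - 1) * hre

theorem deriv_fA_ofReal (a : ℂ) (x : ℝ) : deriv (fA a) x = fADeriv a x := by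
  rw [(hasDerivAt_fA a x).deriv, fADeriv]
  push_cast
  ring

theorem continuous_fADeriv (a : ℂ) : Continuous (fADeriv a) := by
  unfold fADeriv
  fun_prop

theorem fADeriv_one (a : ℂ) : fADeriv a 1 = 2 * normSq (a - 1) := by
  simp only [fADeriv, normSq_apply, sub_re, sub_im, one_re, one_im]
  ring

theorem fADeriv_neg_one (a : ℂ) : fADeriv a (-1) = -2 * normSq (a + 1) := by
  simp only [fADeriv, normSq_apply, add_re, add_im, one_re, one_im]
  ring

theorem fADeriv_sub_fADeriv (a : ℂ) (u v : ℝ) :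
    fADeriv a v - fADeriv a u =
      (v - u) * (3 * (u + v - a.re) ^ 2 + (u - v) ^ 2 + (2 * a.im ^ 2 - a.re ^ 2 - 2)) := by
  simp only [fADeriv, normSq_apply]
  ring

theorem strictMono_fADeriv {a : ℂ} (ha : 2 * a.im ^ 2 - a.re ^ 2 - 2 > 0) :
    StrictMono (fADeriv a) := fun u v huv => by
  rw [← sub_pos, fADeriv_sub_fADeriv]
  exact mul_pos (sub_pos.2 huv) (by positivity)

/-- If `2 Im(a)² − Re(a)² − 2 > 0`, then the cubic `f_a'` has exactly one real root,
which lies in `(-1, 1)`. -/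
theorem fA_deriv_unique_real_root (a : ℂ)
    (ha : 2 * a.im ^ 2 - a.re ^ 2 - 2 > 0) :
    ∃ x : ℝ, x ∈ Set.Ioo (-1 : ℝ) 1 ∧ deriv (fA a) (x : ℂ) = 0 ∧
      ∀ y : ℝ, deriv (fA a) (y : ℂ) = 0 → y = x := by
  have him : a.im ≠ 0 := fun h => by rw [h] at ha; nlinarith [sq_nonneg a.re]
  have hne_one : a - 1 ≠ 0 := fun h => him (by simpa using congrArg im h)
  have hne_neg_one : a + 1 ≠ 0 := fun h => him (by simpa using congrArg im h)
  have hneg : fADeriv a (-1) < 0 := by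
    rw [fADeriv_neg_one]
    exact mul_neg_of_neg_of_pos (by norm_num) (normSq_pos.2 hne_neg_one)
  have hpos : 0 < fADeriv a 1 := by
    rw [fADeriv_one]
    exact mul_pos two_pos (normSq_pos.2 hne_one)
  obtain ⟨x, hx, hx0, huniq⟩ := (strictMono_fADeriv ha).existsUnique_eq_mem_Ioo
    (continuous_fADeriv a).continuousOn hneg hpos
  refine ⟨x, hx, by rw [deriv_fA_ofReal, hx0, ofReal_zero], fun y hy => huniq y ?_⟩
  rwa [deriv_fA_ofReal, ofReal_eq_zero] at hy
end

section
/- Let q ∈ ℂ and define f_q(z) = z²(q − z)/(1 + q̄·z) and η(z) = −1/conj(z). Then for every z ∈ ℂ with z ≠ 0, 1 + q̄·z ≠ 0, conj(z) − q̄ ≠ 0, and f_q(z) ≠ 0, one has f_q(η(z)) = η(f_q(z)); i.e., f_q commutes with the antipodal map. -/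
open Complex

noncomputable def fq (q z : ℂ) : ℂ := z ^ 2 * (q - z) / (1 + starRingEnd ℂ q * z)

noncomputable def antipodal (z : ℂ) : ℂ := -1 / starRingEnd ℂ z

open ComplexConjugate

/-! Writing `w = z̄`, both `f_q(η z)` and `η(f_q z)` reduce to `(1 + q w) / (w² (w - q̄))`. -/

lemma fq_antipodal (q z : ℂ) :
    fq q (antipodal z) = (1 + q * conj z) / (conj z ^ 2 * (conj z - conj q)) := by
  rcases eq_or_ne z 0 with rfl | hz
  · simp [fq, antipodal]
  set w := conj z
  have hw : w ≠ 0 := (map_ne_zero _).mpr hz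
  have hnum : q - -1 / w = (1 + q * w) / w := by field_simp; ring
  have hden : 1 + conj q * (-1 / w) = (w - conj q) / w := by field_simp; ring
  calc fq q (antipodal z) = (w ^ 2)⁻¹ * ((1 + q * w) / w / ((w - conj q) / w)) := by
        rw [fq, antipodal, hnum, hden, mul_div_assoc, div_pow, neg_one_sq, one_div]
    _ = _ := by rw [div_div_div_cancel_right₀ hw, ← mul_div_assoc, inv_mul_eq_div, div_div]

lemma antipodal_fq (q z : ℂ) :
    antipodal (fq q z) = (1 + q * conj z) / (conj z ^ 2 * (conj z - conj q)) := by
  simp only [fq, antipodal, map_div₀, map_mul, map_pow, map_sub, map_add, map_one, conj_conj]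
  rw [neg_div, one_div_div, ← div_neg, neg_mul_eq_mul_neg, neg_sub]

theorem fq_commutes_antipodal_general (q z : ℂ) :
    fq q (antipodal z) = antipodal (fq q z) := by
  rw [fq_antipodal, antipodal_fq]

/-- `f_q` commutes with the antipodal map `η(z) = -1/conj z`. -/
theorem fq_commutes_antipodal (q z : ℂ) (hz : z ≠ 0)
    (hden : 1 + starRingEnd ℂ q * z ≠ 0)
    (hq : starRingEnd ℂ z - starRingEnd ℂ q ≠ 0)
    (hfz : fq q z ≠ 0) :
    fq q (antipodal z) = antipodal (fq q z) :=
  fq_commutes_antipodal_general q z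
end

section
/- Let h be a complex-differentiable function in a neighborhood of z₀ ∈ ℂ with h(z₀) fixed in the following sense: define g(z) = conj(h(z)) and suppose g(z₀) = z₀. Then g∘g is complex-differentiable at z₀ and its derivative there equals |h'(z₀)|². In particular, this derivative is a nonnegative real number, and if it has modulus 1 then it equals exactly 1. -/
open Complex ComplexConjugate

/-- `(conj ∘ h) ∘ (conj ∘ h) = (conj ∘ h ∘ conj) ∘ h` is a composition of holomorphic maps, and
`conj ∘ h ∘ conj` has derivative `conj (h' z₀)` at `h z₀` because `conj (h z₀) = z₀`. -/
theorem HasDerivAt.conj_comp_self_of_conj_apply_eq {h : ℂ → ℂ} {c z₀ : ℂ}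
    (hh : HasDerivAt h c z₀) (hfix : conj (h z₀) = z₀) :
    HasDerivAt ((fun z => conj (h z)) ∘ (fun z => conj (h z))) ((‖c‖ ^ 2 : ℝ) : ℂ) z₀ := by
  have hh' : HasDerivAt h c (conj (h z₀)) := by rwa [hfix]
  have hconj : HasDerivAt (conj ∘ h ∘ conj) (conj c) (h z₀) := by
    simpa using hh'.conj_conj
  push_cast
  rw [← Complex.conj_mul']
  exact hconj.comp z₀ hh

theorem Complex.ofReal_eq_one_of_norm_eq_one_of_nonneg {r : ℝ} (hr : 0 ≤ r)
    (hnorm : ‖(r : ℂ)‖ = 1) : (r : ℂ) = 1 := by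
  rw [Complex.norm_real, Real.norm_of_nonneg hr] at hnorm
  exact_mod_cast hnorm

/-- The second iterate of an antiholomorphic map `g = conj ∘ h` at a fixed point `z₀` is
holomorphic with derivative `|h'(z₀)|²`, a nonnegative real; if its modulus is `1` it equals `1`. -/
theorem antiholomorphic_second_iterate_deriv (h : ℂ → ℂ) (z₀ : ℂ)
    (hdiff : ∀ᶠ z in nhds z₀, DifferentiableAt ℂ h z)
    (hfix : starRingEnd ℂ (h z₀) = z₀) :
    DifferentiableAt ℂ ((fun z => starRingEnd ℂ (h z)) ∘ (fun z => starRingEnd ℂ (h z))) z₀ ∧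
    deriv ((fun z => starRingEnd ℂ (h z)) ∘ (fun z => starRingEnd ℂ (h z))) z₀ =
      ((‖deriv h z₀‖) ^ 2 : ℝ) ∧
    (‖deriv ((fun z => starRingEnd ℂ (h z)) ∘ (fun z => starRingEnd ℂ (h z))) z₀‖ = 1 →
      deriv ((fun z => starRingEnd ℂ (h z)) ∘ (fun z => starRingEnd ℂ (h z))) z₀ = 1) := by
  have hiter := HasDerivAt.conj_comp_self_of_conj_apply_eq hdiff.self_of_nhds.hasDerivAt hfix
  refine ⟨hiter.differentiableAt, hiter.deriv, ?_⟩
  rw [hiter.deriv]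
  exact Complex.ofReal_eq_one_of_norm_eq_one_of_nonneg (by positivity)
end
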